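/- Let A = (Q, Σ, δ, ρ) be an invertible-reversible Mealy automaton. The group ⟨A⟩ generated by A is finite if and only if there is a bound B such that for every n ≥ 0 and every u ∈ Q^n, the orbit of u in Q^n (i.e., the connected component of u in A^n) has size at most B. -/

import Mathlib

namespace MealyFormal

variable {Q X : Type*}

/-- Extended transition function of the dual automaton: the action of a letter
`i ∈ Σ` on words over the stateset `Q`, defined by
`δ_i(ε) = ε` and `δ_i(x w) = δ_i(x) δ_{ρ_x(i)}(w)`. -/
def dExt (δ : X → Q → Q) (ρ : Q → X → X) : X → List Q → List Q
  | _, [] => []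
  | i, x :: w => δ i x :: dExt δ ρ (ρ x i) w

/-- The action `δ_s = δ_{s_n} ∘ ⋯ ∘ δ_{s_1}` of a word `s` over `Σ` on words over `Q`. -/
def dWord (δ : X → Q → Q) (ρ : Q → X → X) : List X → List Q → List Q
  | [], u => u
  | i :: s, u => dWord δ ρ s (dExt δ ρ i u)

/-- Extended production function: the action of a state `x ∈ Q` on words over the
alphabet `Σ`, defined by `ρ_x(ε) = ε` and `ρ_x(i s) = ρ_x(i) ρ_{δ_i(x)}(s)`. -/
def rExt (δ : X → Q → Q) (ρ : Q → X → X) : Q → List X → List X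
  | _, [] => []
  | x, i :: s => ρ x i :: rExt δ ρ (δ i x) s

/-- The action `ρ_u = ρ_{x_n} ∘ ⋯ ∘ ρ_{x_1}` of a word `u = x_1⋯x_n` over `Q`
on words over `Σ`. -/
def rWord (δ : X → Q → Q) (ρ : Q → X → X) : List Q → List X → List X
  | [], s => s
  | x :: u, s => rWord δ ρ u (rExt δ ρ x s)

/-- `v` lies in the orbit of `u` under the action of the dual automaton. -/
def InOrbit (δ : X → Q → Q) (ρ : Q → X → X) (u v : List Q) : Prop :=
  ∃ s : List X, dWord δ ρ s u = v

/-- The orbit (connected component of the corresponding power) of a word over `Q`. -/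
def orbit (δ : X → Q → Q) (ρ : Q → X → X) (u : List Q) : Set (List Q) :=
  {v | InOrbit δ ρ u v}

/-- The action of the dual automaton on `Q^n` is transitive, i.e. `A^n` is connected. -/
def LevelTransitive (δ : X → Q → Q) (ρ : Q → X → X) (n : ℕ) : Prop :=
  ∀ u v : List Q, u.length = n → v.length = n → InOrbit δ ρ u v

/-- The label `ℓ(u x)` of the nonempty word `u x`:
the number of `z ∈ Q` with `u z` in the orbit of `u x`. -/
noncomputable def label (δ : X → Q → Q) (ρ : Q → X → X) (u : List Q) (x : Q) : ℕ :=
  Set.ncard {z : Q | InOrbit δ ρ (u ++ [x]) (u ++ [z])}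

/-- Prefix of length `i` of the (infinite) word `w = w_1 w_2 ⋯`. -/
def pref (w : ℕ → Q) (i : ℕ) : List Q := (List.range i).map w

/-- The `n`-th power `u^n` of a word `u`. -/
def wpow (u : List Q) (n : ℕ) : List Q := (List.replicate n u).flatten

/-- The group generated by the Mealy automaton: the subgroup of permutations of `Σ*`
generated by the production functions `ρ_x`, `x ∈ Q`. -/
def autGroup (δ : X → Q → Q) (ρ : Q → X → X) : Subgroup (Equiv.Perm (List X)) :=
  Subgroup.closure {π : Equiv.Perm (List X) | ∃ q : Q, ⇑π = rExt δ ρ q}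

/-- The semigroup of maps `Σ* → Σ*` generated under composition by the `ρ_x`, `x ∈ Q`. -/
def prodSemigroup (δ : X → Q → Q) (ρ : Q → X → X) :
    Subsemigroup (Function.End (List X)) :=
  Subsemigroup.closure {f : Function.End (List X) | ∃ q : Q, f = rExt δ ρ q}

/-- The semigroup of maps `Q* → Q*` generated under composition by the `δ_i`, `i ∈ Σ`. -/
def dualSemigroup (δ : X → Q → Q) (ρ : Q → X → X) :
    Subsemigroup (Function.End (List Q)) :=
  Subsemigroup.closure {f : Function.End (List Q) | ∃ i : X, f = dExt δ ρ i}

/-- A word `w` over `Q` is orbital if all its factors of length `c+1`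
belong to the reduction orbit `O2`. -/
def Orbital (c : ℕ) (O2 : Set (List Q)) (w : List Q) : Prop :=
  ∀ f : List Q, f.length = c + 1 → f <:+: w → f ∈ O2

/-- A word is cyclically orbital if each of its powers is orbital. -/
def CycOrbital (c : ℕ) (O2 : Set (List Q)) (w : List Q) : Prop :=
  ∀ n : ℕ, Orbital c O2 (wpow w n)

/-- The standing setup: `A` is a connected invertible-reversible Mealy automaton
with 3 states, `0 < c = cd(A) < ∞`, and `Q^{c+1}` splits into exactly two orbits,
of sizes `2·3^c` and `3^c`; `O2` is the reduction orbit, of size `2·3^c`. -/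
structure StandingSetup (δ : X → Q → Q) (ρ : Q → X → X) (c : ℕ) (O2 : Set (List Q)) :
    Prop where
  card_three : Nat.card Q = 3
  invertible : ∀ q : Q, Function.Bijective (ρ q)
  reversible : ∀ i : X, Function.Bijective (δ i)
  connected : LevelTransitive δ ρ 1
  c_pos : 0 < c
  trans_c : LevelTransitive δ ρ c
  not_trans_succ : ¬ LevelTransitive δ ρ (c + 1)
  O2_is_orbit : ∃ w : List Q, w.length = c + 1 ∧ O2 = orbit δ ρ w
  O2_card : O2.ncard = 2 * 3 ^ c
  other_is_orbit : ∃ w : List Q, w.length = c + 1 ∧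
    orbit δ ρ w = {v : List Q | v.length = c + 1} \ O2
  other_card : ({v : List Q | v.length = c + 1} \ O2).ncard = 3 ^ c


section Aux

variable {Q X : Type*} (δ : X → Q → Q) (ρ : Q → X → X)

/-- Fold of the transition functions along an input word. -/
def dLet (δ : X → Q → Q) : List X → Q → Q
  | [], x => x
  | i :: s, x => dLet δ s (δ i x)

/-- Output letter produced by a state word on an input letter. -/
def oLet (ρ : Q → X → X) : List Q → X → X
  | [], i => i
  | x :: u, i => oLet ρ u (ρ x i)

lemma dWord_nil : ∀ s : List X, dWord δ ρ s ([] : List Q) = [] := by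
  intro s
  induction s with
  | nil => rfl
  | cons i s ih => simpa [dWord, dExt] using ih

lemma rWord_nil : ∀ u : List Q, rWord δ ρ u ([] : List X) = [] := by
  intro u
  induction u with
  | nil => rfl
  | cons x u ih => simpa [rWord, rExt] using ih

lemma dWord_cons : ∀ (s : List X) (x : Q) (w : List Q),
    dWord δ ρ s (x :: w) = dLet δ s x :: dWord δ ρ (rExt δ ρ x s) w := by
  intro s
  induction s with
  | nil => intro x w; rfl
  | cons i s ih =>
    intro x w
    show dWord δ ρ s (δ i x :: dExt δ ρ (ρ x i) w) = _
    rw [ih]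
    rfl

lemma rWord_cons : ∀ (u : List Q) (i : X) (s : List X),
    rWord δ ρ u (i :: s) = oLet ρ u i :: rWord δ ρ (dExt δ ρ i u) s := by
  intro u
  induction u with
  | nil => intro i s; rfl
  | cons x u ih =>
    intro i s
    show rWord δ ρ u (ρ x i :: rExt δ ρ (δ i x) s) = _
    rw [ih]
    rfl

lemma dWord_append : ∀ (s t : List X) (u : List Q),
    dWord δ ρ (s ++ t) u = dWord δ ρ t (dWord δ ρ s u) := by
  intro s
  induction s with
  | nil => intro t u; rfl
  | cons i s ih => intro t u; exact ih t (dExt δ ρ i u)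

lemma rWord_append : ∀ (u v : List Q) (s : List X),
    rWord δ ρ (u ++ v) s = rWord δ ρ v (rWord δ ρ u s) := by
  intro u
  induction u with
  | nil => intro v s; rfl
  | cons x u ih => intro v s; exact ih v (rExt δ ρ x s)

lemma dExt_length : ∀ (i : X) (u : List Q), (dExt δ ρ i u).length = u.length := by
  intro i u
  induction u generalizing i with
  | nil => rfl
  | cons x w ih => simpa [dExt] using ih (ρ x i)

lemma dWord_length : ∀ (s : List X) (u : List Q), (dWord δ ρ s u).length = u.length := by
  intro s
  induction s with
  | nil => intro u; rfl
  | cons i s ih => intro u; rw [show dWord δ ρ (i :: s) u = dWord δ ρ s (dExt δ ρ i u) from rfl,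
      ih, dExt_length]

lemma mem_orbit_self (u : List Q) : u ∈ orbit δ ρ u := ⟨[], rfl⟩

lemma dExt_mem_orbit {u v : List Q} (h : v ∈ orbit δ ρ u) (i : X) :
    dExt δ ρ i v ∈ orbit δ ρ u := by
  obtain ⟨s, rfl⟩ := h
  exact ⟨s ++ [i], by rw [dWord_append]; rfl⟩

lemma finite_setOf_length [Finite Q] (n : ℕ) : {l : List Q | l.length = n}.Finite := by
  induction n with
  | zero =>
    refine (Set.finite_singleton ([] : List Q)).subset ?_
    intro l hl
    simp only [Set.mem_setOf_eq, List.length_eq_zero_iff] at hl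
    simp [hl]
  | succ n ih =>
    refine (Set.Finite.image2 List.cons Set.finite_univ ih).subset ?_
    intro l hl
    match l, hl with
    | x :: t, hl =>
      exact Set.mem_image2_of_mem (Set.mem_univ x) (by simpa using hl)

lemma orbit_finite [Finite Q] (u : List Q) : (orbit δ ρ u).Finite := by
  refine (finite_setOf_length (Q := Q) u.length).subset ?_
  rintro v ⟨s, rfl⟩
  exact dWord_length δ ρ s u

instance orbit_finite_inst [Finite Q] (u : List Q) : Finite ↥(orbit δ ρ u) :=
  (orbit_finite δ ρ u).to_subtype

lemma rExt_injective (hinv : ∀ q : Q, Function.Bijective (ρ q)) :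
    ∀ (s t : List X) (x : Q), rExt δ ρ x s = rExt δ ρ x t → s = t := by
  intro s
  induction s with
  | nil => intro t x h; cases t with
    | nil => rfl
    | cons j t => simp [rExt] at h
  | cons i s ih =>
    intro t x h
    cases t with
    | nil => simp [rExt] at h
    | cons j t =>
      simp only [rExt, List.cons.injEq] at h
      obtain ⟨h1, h2⟩ := h
      have hij : i = j := (hinv x).1 h1
      subst hij
      rw [ih t (δ i x) h2]

lemma rExt_surjective (hinv : ∀ q : Q, Function.Bijective (ρ q)) :
    ∀ (t : List X) (x : Q), ∃ s, rExt δ ρ x s = t := by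
  intro t
  induction t with
  | nil => intro x; exact ⟨[], rfl⟩
  | cons j t ih =>
    intro x
    obtain ⟨i, hi⟩ := (hinv x).2 j
    obtain ⟨s, hs⟩ := ih (δ i x)
    exact ⟨i :: s, by simp [rExt, hi, hs]⟩

lemma rExt_bijective (hinv : ∀ q : Q, Function.Bijective (ρ q)) (x : Q) :
    Function.Bijective (rExt δ ρ x) :=
  ⟨fun a b h => rExt_injective δ ρ hinv a b x h,
   fun t => rExt_surjective δ ρ hinv t x⟩

/-- The production function of a state as a permutation of `Σ*`. -/
noncomputable def rPerm (hinv : ∀ q : Q, Function.Bijective (ρ q)) (x : Q) :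
    Equiv.Perm (List X) :=
  Equiv.ofBijective _ (rExt_bijective δ ρ hinv x)

lemma rPerm_mem (hinv : ∀ q : Q, Function.Bijective (ρ q)) (x : Q) :
    rPerm δ ρ hinv x ∈ autGroup δ ρ :=
  Subgroup.subset_closure ⟨x, rfl⟩

lemma dWord_eq_of_dLet (hinv : ∀ q : Q, Function.Bijective (ρ q)) (u : List Q) :
    ∀ s s' : List X,
      (∀ g : ↥(autGroup δ ρ), dLet δ ((g : Equiv.Perm (List X)) s)
        = dLet δ ((g : Equiv.Perm (List X)) s')) →
      dWord δ ρ s u = dWord δ ρ s' u := by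
  induction u with
  | nil => intro s s' _; rw [dWord_nil, dWord_nil]
  | cons x w ih =>
    intro s s' h
    rw [dWord_cons, dWord_cons]
    have h1 : dLet δ s = dLet δ s' := by simpa using h 1
    have h2 : dWord δ ρ (rExt δ ρ x s) w = dWord δ ρ (rExt δ ρ x s') w := by
      apply ih
      intro g
      have := h (g * ⟨rPerm δ ρ hinv x, rPerm_mem δ ρ hinv x⟩)
      simpa [Equiv.Perm.mul_apply, rPerm] using this
    rw [congrFun h1 x, h2]

lemma orbits_bounded_of_finite [Finite Q] (hinv : ∀ q : Q, Function.Bijective (ρ q))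
    (hG : Finite ↥(autGroup δ ρ)) :
    ∃ B : ℕ, ∀ u : List Q, (orbit δ ρ u).ncard ≤ B := by
  classical
  refine ⟨Nat.card (↥(autGroup δ ρ) → Q → Q), fun u => ?_⟩
  rw [← Nat.card_coe_set_eq]
  refine Nat.card_le_card_of_injective
    (fun v : ↥(orbit δ ρ u) =>
      (fun g : ↥(autGroup δ ρ) =>
        dLet δ ((g : Equiv.Perm (List X)) ((show InOrbit δ ρ u ↑v from v.2).choose)))) ?_
  intro v w hvw
  apply Subtype.ext
  have hv : InOrbit δ ρ u ↑v := v.2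
  have hw : InOrbit δ ρ u ↑w := w.2
  rw [← hv.choose_spec, ← hw.choose_spec]
  exact dWord_eq_of_dLet δ ρ hinv u _ _ (fun g => congrFun hvw g)

/-- Step of the orbit automaton. -/
def oStep (u : List Q) (i : X) (v : ↥(orbit δ ρ u)) : ↥(orbit δ ρ u) :=
  ⟨dExt δ ρ i ↑v, dExt_mem_orbit δ ρ v.2 i⟩

/-- The chosen enumeration of an orbit. -/
noncomputable def oEquiv [Finite Q] (u : List Q) :
    ↥(orbit δ ρ u) ≃ Fin (Nat.card ↥(orbit δ ρ u)) :=
  Finite.equivFin _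

/-- Encoding of the pointed orbit automaton of a word into a finite type. -/
noncomputable def enc [Finite Q] (B : ℕ)
    (hB : ∀ u : List Q, Nat.card ↥(orbit δ ρ u) ≤ B + 1) (u : List Q) :
    Fin (B + 2) × (X → Fin (B + 1) → Fin (B + 1)) × (Fin (B + 1) → X → X) × Fin (B + 1) :=
  ⟨⟨Nat.card ↥(orbit δ ρ u), by have := hB u; omega⟩,
   fun i j =>
     if hj : (j : ℕ) < Nat.card ↥(orbit δ ρ u) then
       Fin.castLE (hB u) ((oEquiv δ ρ u)
         (oStep δ ρ u i ((oEquiv δ ρ u).symm ⟨(j : ℕ), hj⟩)))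
     else j,
   fun j x =>
     if hj : (j : ℕ) < Nat.card ↥(orbit δ ρ u) then
       oLet ρ (((oEquiv δ ρ u).symm ⟨(j : ℕ), hj⟩) : List Q) x
     else x,
   Fin.castLE (hB u) ((oEquiv δ ρ u) ⟨u, mem_orbit_self δ ρ u⟩)⟩

lemma rWord_eq_of_enc_eq [Finite Q] (B : ℕ)
    (hB : ∀ u : List Q, Nat.card ↥(orbit δ ρ u) ≤ B + 1) {u u' : List Q}
    (h : enc δ ρ B hB u = enc δ ρ B hB u') : rWord δ ρ u = rWord δ ρ u' := by
  classical
  have hk : Nat.card ↥(orbit δ ρ u) = Nat.card ↥(orbit δ ρ u') := by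
    have := congrArg (fun p => ((p.1 : Fin (B + 2)) : ℕ)) h
    simpa [enc] using this
  have hT := congrArg (fun p => p.2.1) h
  have hO := congrArg (fun p => p.2.2.1) h
  have hb := congrArg (fun p => ((p.2.2.2 : Fin (B + 1)) : ℕ)) h
  simp only [enc] at hT hO hb
  have hlt : ∀ v : ↥(orbit δ ρ u),
      ((oEquiv δ ρ u v : Fin _) : ℕ) < Nat.card ↥(orbit δ ρ u') := by
    intro v; rw [← hk]; exact (oEquiv δ ρ u v).isLt
  set φ : ↥(orbit δ ρ u) → ↥(orbit δ ρ u') :=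
    fun v => (oEquiv δ ρ u').symm ⟨((oEquiv δ ρ u v : Fin _) : ℕ), hlt v⟩ with hφ
  -- outputs agree
  have hout : ∀ (v : ↥(orbit δ ρ u)) (x : X), oLet ρ (↑v) x = oLet ρ (↑(φ v)) x := by
    intro v x
    have := congrFun (congrFun hO (Fin.castLE (hB u) (oEquiv δ ρ u v))) x
    simp only [Fin.coe_castLE] at this
    rw [dif_pos ((oEquiv δ ρ u v).isLt), dif_pos (hlt v)] at this
    simp only [Fin.val_castLE, Fin.eta, Equiv.symm_apply_apply] at this
    simpa [Fin.eta, hφ] using this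
  -- transitions agree
  have hstep : ∀ (i : X) (v : ↥(orbit δ ρ u)),
      φ (oStep δ ρ u i v) = oStep δ ρ u' i (φ v) := by
    intro i v
    have := congrFun (congrFun hT i) (Fin.castLE (hB u) (oEquiv δ ρ u v))
    simp only [Fin.coe_castLE] at this
    rw [dif_pos ((oEquiv δ ρ u v).isLt), dif_pos (hlt v)] at this
    have hval : ((oEquiv δ ρ u (oStep δ ρ u i v) : Fin _) : ℕ)
        = ((oEquiv δ ρ u' (oStep δ ρ u' i (φ v)) : Fin _) : ℕ) := by
      simp only [Fin.val_castLE, Fin.eta, Equiv.symm_apply_apply] at this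
      simpa only [Fin.ext_iff, Fin.val_castLE] using this
    rw [hφ]
    show (oEquiv δ ρ u').symm _ = _
    rw [show (⟨((oEquiv δ ρ u (oStep δ ρ u i v) : Fin _) : ℕ), hlt _⟩
        : Fin (Nat.card ↥(orbit δ ρ u')))
        = oEquiv δ ρ u' (oStep δ ρ u' i (φ v)) from Fin.ext hval]
    exact (oEquiv δ ρ u').symm_apply_apply _
  -- basepoints correspond
  have hbase : φ ⟨u, mem_orbit_self δ ρ u⟩ = ⟨u', mem_orbit_self δ ρ u'⟩ := by
    have hval : ((oEquiv δ ρ u ⟨u, mem_orbit_self δ ρ u⟩ : Fin _) : ℕ)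
        = ((oEquiv δ ρ u' ⟨u', mem_orbit_self δ ρ u'⟩ : Fin _) : ℕ) := by
      simpa only [Fin.val_castLE] using hb
    rw [hφ]
    show (oEquiv δ ρ u').symm _ = _
    rw [show (⟨((oEquiv δ ρ u ⟨u, mem_orbit_self δ ρ u⟩ : Fin _) : ℕ), hlt _⟩
        : Fin (Nat.card ↥(orbit δ ρ u')))
        = oEquiv δ ρ u' ⟨u', mem_orbit_self δ ρ u'⟩ from Fin.ext hval]
    exact (oEquiv δ ρ u').symm_apply_apply _
  -- main induction
  have main : ∀ (s : List X) (v : ↥(orbit δ ρ u)),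
      rWord δ ρ (↑v) s = rWord δ ρ (↑(φ v)) s := by
    intro s
    induction s with
    | nil => intro v; rw [rWord_nil, rWord_nil]
    | cons i s ih =>
      intro v
      rw [rWord_cons, rWord_cons]
      have h1 : dExt δ ρ i (↑v : List Q) = ↑(oStep δ ρ u i v) := rfl
      have h2 : dExt δ ρ i (↑(φ v) : List Q) = ↑(oStep δ ρ u' i (φ v)) := rfl
      rw [h1, h2, ← hstep i v, hout v i, ih (oStep δ ρ u i v)]
  funext s
  have := main s ⟨u, mem_orbit_self δ ρ u⟩
  rwa [hbase] at this

lemma range_rWord_finite [Finite Q] [Finite X]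
    (hB : ∃ B : ℕ, ∀ u : List Q, (orbit δ ρ u).ncard ≤ B) :
    (Set.range (rWord δ ρ)).Finite := by
  classical
  obtain ⟨B, hB⟩ := hB
  have hB' : ∀ u : List Q, Nat.card ↥(orbit δ ρ u) ≤ B + 1 := fun u => by
    rw [Nat.card_coe_set_eq]; exact (hB u).trans (Nat.le_succ B)
  set c := enc δ ρ B hB' with hc
  set F : (Fin (B + 2) × (X → Fin (B + 1) → Fin (B + 1)) × (Fin (B + 1) → X → X)
      × Fin (B + 1)) → (List X → List X) :=
    fun d => if h : ∃ w : List Q, c w = d then rWord δ ρ h.choose else id with hF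
  refine (Set.finite_range F).subset ?_
  rintro f ⟨u, rfl⟩
  refine ⟨c u, ?_⟩
  have hex : ∃ w : List Q, c w = c u := ⟨u, rfl⟩
  show F (c u) = rWord δ ρ u
  rw [hF]
  simp only [dif_pos hex]
  exact rWord_eq_of_enc_eq δ ρ B hB' hex.choose_spec

lemma finite_of_orbits_bounded [Finite Q] [Finite X]
    (hB : ∃ B : ℕ, ∀ u : List Q, (orbit δ ρ u).ncard ≤ B) :
    Finite ↥(autGroup δ ρ) := by
  classical
  have hfin : (Set.range (rWord δ ρ)).Finite := range_rWord_finite δ ρ hB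
  set gens := {π : Equiv.Perm (List X) | ∃ q : Q, ⇑π = rExt δ ρ q} with hgens
  set M := Submonoid.closure gens with hM
  have hMset : ∀ π ∈ M, ∃ u : List Q, ⇑π = rWord δ ρ u := by
    intro π hπ
    induction hπ using Submonoid.closure_induction with
    | mem π h =>
      obtain ⟨q, hq⟩ := h
      exact ⟨[q], by funext s; rw [hq]; rfl⟩
    | one => exact ⟨[], rfl⟩
    | mul a b ha hb iha ihb =>
      obtain ⟨p, hp⟩ := iha
      obtain ⟨r, hr⟩ := ihb
      refine ⟨r ++ p, ?_⟩
      funext s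
      rw [rWord_append]
      show a (b s) = _
      rw [hp, hr]
  have hMfin : ((M : Set (Equiv.Perm (List X)))).Finite := by
    apply Set.Finite.of_finite_image (f := fun π : Equiv.Perm (List X) => ⇑π)
    · refine hfin.subset ?_
      rintro f ⟨π, hπ, rfl⟩
      obtain ⟨u, hu⟩ := hMset π hπ
      exact ⟨u, hu.symm⟩
    · intro a _ b _ hab
      exact Equiv.coe_fn_injective hab
  have key : ∀ (π : Equiv.Perm (List X)), π ∈ M → ∀ a b : ℕ, a < b →
      π ^ (a + 1) = π ^ (b + 1) → π⁻¹ ∈ M := by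
    intro π hπ a b hab hpow
    have h2 : π ^ (b - a) = 1 := by
      have h1 : π ^ (a + 1) * π ^ (b - a) = π ^ (b + 1) := by
        rw [← pow_add]; congr 1; omega
      rw [← hpow] at h1
      exact mul_left_cancel (a := π ^ (a + 1)) (by rw [h1, mul_one])
    have h3 : π * π ^ (b - a - 1) = 1 := by
      rw [← pow_succ', show b - a - 1 + 1 = b - a by omega]
      exact h2
    rw [inv_eq_of_mul_eq_one_right h3]
    exact M.pow_mem hπ (b - a - 1)
  have hinvM : ∀ π ∈ M, π⁻¹ ∈ M := by
    intro π hπ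
    haveI : Finite ↥(M : Set (Equiv.Perm (List X))) := hMfin.to_subtype
    have hni : ¬ Function.Injective
        (fun n : ℕ => (⟨π ^ (n + 1), M.pow_mem hπ (n + 1)⟩
          : ↥(M : Set (Equiv.Perm (List X))))) := by
      intro hinj
      exact (Finite.of_injective _ hinj).false
    rw [Function.not_injective_iff] at hni
    obtain ⟨a, b, heq, hne⟩ := hni
    have hpow : π ^ (a + 1) = π ^ (b + 1) := by
      simpa [Subtype.ext_iff] using heq
    rcases Nat.lt_or_ge a b with hab | hab
    · exact key π hπ a b hab hpow
    · exact key π hπ b a (by omega) hpow.symm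
  let H : Subgroup (Equiv.Perm (List X)) :=
    { M with inv_mem' := fun {x} hx => hinvM x hx }
  have hle : autGroup δ ρ ≤ H := by
    rw [autGroup, Subgroup.closure_le]
    intro π hπ
    exact (Submonoid.subset_closure hπ : π ∈ M)
  have hsub : ((autGroup δ ρ : Set (Equiv.Perm (List X))))
      ⊆ (M : Set (Equiv.Perm (List X))) := fun x hx => hle hx
  have : ((autGroup δ ρ : Set (Equiv.Perm (List X)))).Finite := hMfin.subset hsub
  exact this.to_subtype

end Aux

/-- An invertible-reversible Mealy automaton generates a finite group
if and only if the connected components of its powers (the orbits of words over `Q`)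
have bounded size. -/
theorem group_finite_iff_orbits_bounded
    {Q X : Type*} [Finite Q] [Finite X] [Nonempty Q] [Nonempty X]
    (δ : X → Q → Q) (ρ : Q → X → X)
    (hinv : ∀ q : Q, Function.Bijective (ρ q))
    (hrev : ∀ i : X, Function.Bijective (δ i)) :
    Finite ↥(autGroup δ ρ) ↔ ∃ B : ℕ, ∀ u : List Q, (orbit δ ρ u).ncard ≤ B := by
  constructor
  · intro hG
    exact orbits_bounded_of_finite δ ρ hinv hG
  · intro h
    exact finite_of_orbits_bounded δ ρ h

end MealyFormal
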